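/- Let A, B, P, Q be real polynomials such that A ≺ B and P ≺ Q are pairs of standard polynomials with only real nonpositive zeros. Then for all λ, ρ > 0, λAP + ρBP ≺ λAQ + ρBQ and λBP + ρxAP ≺ λBQ + ρxAQ; i.e., (AP, BP, AQ, BQ) forms an interpolatory square. -/

import Mathlib

/-!
For `w` in the open upper half-plane, `A(w)` is a positive multiple of `exp (i Σ arg (w - ξ))`,
the sum running over the zeros `ξ` of `A`. Each `arg (w - ξ)` lies in `(0, π)` and increases
with `ξ`, so when the zeros of `A` and `B` alternate, the arguments of `A(w)` and `B(w)` differ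
by an angle in `[0, π)` and `λA(w) + ρB(w) ≠ 0`: the polynomial `λA + ρB` has only real zeros
(Hermite–Biehler). As all zeros are nonpositive, `A ≺ B` gives `B ≺ xA`, so `λB + ρxA` has
only real zeros as well.

Both relations of the square have the form `FP ≺ FQ` with `F` real-rooted. For sorted zero
lists, alternation amounts to the inequalities `N_P ≤ N_Q ≤ N_P + 1` (or the reverse ones)
between the counting functions `N_P(t) = #{zeros of P in (-∞, t]}`, and `N_{FP} = N_F + N_P`,
so multiplying by `F` preserves `≺`.
-/

open Polynomial

/-- A real polynomial is standard if it is zero or has positive leading coefficient. -/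
def Standard (A : Polynomial ℝ) : Prop := A = 0 ∨ 0 < A.leadingCoeff

/-- A real polynomial has only real zeros (or is identically zero). -/
def RealRooted (A : Polynomial ℝ) : Prop :=
  A = 0 ∨ ∀ z : ℂ, (Polynomial.aeval z) A = 0 → z.im = 0

/-- A real polynomial has only real nonpositive zeros (or is identically zero). -/
def OnlyNonposZeros (A : Polynomial ℝ) : Prop :=
  A = 0 ∨ ∀ z : ℂ, (Polynomial.aeval z) A = 0 → z.im = 0 ∧ z.re ≤ 0

open scoped Classical in
/-- The real roots of `A`, with multiplicity, listed in increasing order. -/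
noncomputable def sroots (A : Polynomial ℝ) : List ℝ := A.roots.sort (· ≤ ·)

/-- `A` interlaces `B`: `deg B = deg A + 1` and the zeros satisfy
`θ₁ ≤ ξ₁ ≤ θ₂ ≤ ⋯ ≤ ξ_a ≤ θ_{a+1}`. -/
def Interlaces (A B : Polynomial ℝ) : Prop :=
  B.natDegree = A.natDegree + 1 ∧
    ∀ i < A.natDegree,
      (sroots B).getD i 0 ≤ (sroots A).getD i 0 ∧
        (sroots A).getD i 0 ≤ (sroots B).getD (i + 1) 0

/-- `A` alternates left of `B`: `deg A = deg B` and the zeros satisfy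
`ξ₁ ≤ θ₁ ≤ ξ₂ ≤ ⋯ ≤ ξ_a ≤ θ_a`. -/
def AltLeft (A B : Polynomial ℝ) : Prop :=
  A.natDegree = B.natDegree ∧
    (∀ i < A.natDegree, (sroots A).getD i 0 ≤ (sroots B).getD i 0) ∧
    (∀ i, i + 1 < A.natDegree → (sroots B).getD i 0 ≤ (sroots A).getD (i + 1) 0)

/-- `A ≺ B`: either `A` interlaces `B` or `A` alternates left of `B` (both polynomials
having only real zeros); by convention `0 ≺ B` and `A ≺ 0` always hold. -/
def Prec (A B : Polynomial ℝ) : Prop :=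
  A = 0 ∨ B = 0 ∨ (RealRooted A ∧ RealRooted B ∧ (Interlaces A B ∨ AltLeft A B))

theorem List.Pairwise.getD_le_iff_lt_countP {α : Type*} [Preorder α] [DecidableLE α]
    {l : List α} (hl : l.Pairwise (· ≤ ·)) {i : ℕ} (hi : i < l.length) (d t : α) :
    l.getD i d ≤ t ↔ i < l.countP (· ≤ t) := by
  induction l generalizing i with
  | nil => simp at hi
  | cons a l ih =>
    rw [List.pairwise_cons] at hl
    by_cases hat : a ≤ t
    · rcases i with _ | i
      · simp [hat]
      · rw [List.getD_cons_succ, List.countP_cons, if_pos (by simpa),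
          ih hl.2 (by simpa using hi), Nat.add_lt_add_iff_right]
    · have hle : a ≤ (a :: l).getD i d := by
        rw [List.getD_eq_getElem _ _ hi]
        rcases List.mem_cons.mp (List.getElem_mem hi) with h | h
        · exact h.ge
        · exact hl.1 _ h
      have h0 : (a :: l).countP (· ≤ t) = 0 :=
        List.countP_eq_zero.2 fun x hx hxt => by
          rcases List.mem_cons.mp hx with rfl | hx
          · exact hat (of_decide_eq_true hxt)
          · exact hat ((hl.1 x hx).trans (of_decide_eq_true hxt))
      simp only [h0, Nat.not_lt_zero, iff_false]
      exact fun h => hat (hle.trans h)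

theorem List.sum_map_eq_sum_range_getD {α M : Type*} [AddCommMonoid M] (f : α → M)
    (l : List α) (d : α) :
    (l.map f).sum = ∑ i ∈ Finset.range l.length, f (l.getD i d) := by
  induction l with
  | nil => simp
  | cons a l ih => simp [ih, Finset.sum_range_succ', add_comm]

/-- The chain `u₀ ≤ v₀ ≤ u₁ ≤ v₁ ≤ ⋯`, as far as both lists go. -/
def Alternating (u v : List ℝ) : Prop :=
  (∀ i < v.length, u.getD i 0 ≤ v.getD i 0) ∧
    ∀ i, i + 1 < u.length → v.getD i 0 ≤ u.getD (i + 1) 0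

theorem alternating_iff_countP {u v : List ℝ} (hu : u.Pairwise (· ≤ ·))
    (hv : v.Pairwise (· ≤ ·)) (hvu : v.length ≤ u.length) (huv : u.length ≤ v.length + 1) :
    Alternating u v ↔
      ∀ t, v.countP (· ≤ t) ≤ u.countP (· ≤ t) ∧
        u.countP (· ≤ t) ≤ v.countP (· ≤ t) + 1 := by
  have hcu := fun t => u.countP_le_length (p := (· ≤ t))
  have hcv := fun t => v.countP_le_length (p := (· ≤ t))
  constructor
  · rintro ⟨hle, hge⟩ t
    constructor
    · by_contra! h
      have hk : v.countP (· ≤ t) - 1 < v.length := by grind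
      have := (hv.getD_le_iff_lt_countP hk 0 t).2 (by omega)
      have := (hu.getD_le_iff_lt_countP (hk.trans_le hvu) 0 t).1 ((hle _ hk).trans this)
      omega
    · by_contra! h
      have hk : u.countP (· ≤ t) - 2 + 1 < u.length := by grind
      have := (hu.getD_le_iff_lt_countP hk 0 t).2 (by omega)
      have := (hv.getD_le_iff_lt_countP (by omega) 0 t).1 ((hge _ hk).trans this)
      omega
  · intro h
    constructor
    · intro i hi
      have := (hv.getD_le_iff_lt_countP hi 0 _).1 le_rfl
      exact (hu.getD_le_iff_lt_countP (by omega) 0 _).2 (this.trans_le (h _).1)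
    · intro i hi
      have := (hu.getD_le_iff_lt_countP hi 0 _).1 le_rfl
      exact (hv.getD_le_iff_lt_countP (by omega) 0 _).2 (by have := (h (u.getD (i + 1) 0)).2; omega)

section ArgumentSums

variable {f : ℝ → ℝ} {c : ℝ} {u v : List ℝ}

theorem Alternating.sum_map_sub_mem_Ico_of_length_eq_succ (h : Alternating u v)
    (hlen : u.length = v.length + 1) (hf : Monotone f) (hf0 : ∀ s, 0 ≤ f s)
    (hfc : ∀ s, f s < c) : (u.map f).sum - (v.map f).sum ∈ Set.Ico 0 c := by
  rw [List.sum_map_eq_sum_range_getD f u 0, List.sum_map_eq_sum_range_getD f v 0, hlen]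
  constructor
  · have : ∑ i ∈ Finset.range v.length, f (v.getD i 0) ≤
        ∑ i ∈ Finset.range v.length, f (u.getD (i + 1) 0) :=
      Finset.sum_le_sum fun i hi => hf (h.2 i (by simp at hi; omega))
    rw [Finset.sum_range_succ']
    linarith [hf0 (u.getD 0 0)]
  · have : ∑ i ∈ Finset.range v.length, f (u.getD i 0) ≤
        ∑ i ∈ Finset.range v.length, f (v.getD i 0) :=
      Finset.sum_le_sum fun i hi => hf (h.1 i (by simpa using hi))
    rw [Finset.sum_range_succ]
    linarith [hfc (u.getD v.length 0)]

theorem Alternating.sum_map_sub_mem_Ico_of_length_eq (h : Alternating u v)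
    (hlen : u.length = v.length) (hf : Monotone f) (hf0 : ∀ s, 0 ≤ f s)
    (hfc : ∀ s, f s < c) : (v.map f).sum - (u.map f).sum ∈ Set.Ico 0 c := by
  rw [List.sum_map_eq_sum_range_getD f u 0, List.sum_map_eq_sum_range_getD f v 0, hlen]
  constructor
  · have : ∑ i ∈ Finset.range v.length, f (u.getD i 0) ≤
        ∑ i ∈ Finset.range v.length, f (v.getD i 0) :=
      Finset.sum_le_sum fun i hi => hf (h.1 i (by simpa using hi))
    linarith
  · obtain hn | ⟨n, hn⟩ : v.length = 0 ∨ ∃ n, v.length = n + 1 := by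
      cases v.length <;> simp
    · simpa [hn] using (hf0 0).trans_lt (hfc 0)
    · have : ∑ i ∈ Finset.range n, f (v.getD i 0) ≤
          ∑ i ∈ Finset.range n, f (u.getD (i + 1) 0) :=
        Finset.sum_le_sum fun i hi => hf (h.2 i (by simp at hi; omega))
      rw [hn, Finset.sum_range_succ, Finset.sum_range_succ']
      linarith [hf0 (u.getD 0 0), hfc (v.getD n 0)]

end ArgumentSums

namespace Complex

theorem arg_sub_ofReal_mem_Ioo {w : ℂ} (hw : 0 < w.im) (s : ℝ) :
    arg (w - s) ∈ Set.Ioo 0 Real.pi := by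
  have him : 0 < (w - s).im := by simpa using hw
  refine ⟨(arg_nonneg_iff.2 him.le).lt_of_ne fun h => ?_, arg_lt_pi_iff.2 (Or.inr him.ne')⟩
  linarith [(arg_eq_zero_iff.1 h.symm).2]

theorem monotone_arg_sub_ofReal {w : ℂ} (hw : 0 < w.im) :
    Monotone fun s : ℝ => arg (w - s) := by
  intro s u hsu
  by_contra! hlt
  have hu := arg_sub_ofReal_mem_Ioo hw u
  have hs := arg_sub_ofReal_mem_Ioo hw s
  have hu0 : w - u ≠ 0 := fun h => hw.ne' (by simpa using congrArg im h)
  have hs0 : w - s ≠ 0 := fun h => hw.ne' (by simpa using congrArg im h)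
  have hsin : 0 ≤ Real.sin (arg (w - u) - arg (w - s)) := by
    rw [Real.sin_sub, sin_arg, sin_arg, cos_arg hu0, cos_arg hs0]
    have : (w - u).im / ‖w - u‖ * ((w - s).re / ‖w - s‖) - (w - u).re / ‖w - u‖ *
        ((w - s).im / ‖w - s‖) = w.im * (u - s) / (‖w - u‖ * ‖w - s‖) := by
      simp only [sub_im, sub_re, ofReal_im, ofReal_re, sub_zero]
      ring
    rw [this]
    have := sub_nonneg.2 hsu
    positivity
  linarith [Real.sin_neg_of_neg_of_neg_pi_lt (sub_neg.2 hlt) (by linarith [hu.1, hs.2])]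

theorem ofReal_mul_exp_add_ofReal_mul_exp_ne_zero {R S α β : ℝ} (hR : 0 < R) (hS : 0 < S)
    (h : β - α ∈ Set.Ico 0 Real.pi) : (R : ℂ) * exp (α * I) + S * exp (β * I) ≠ 0 := by
  have hsplit : (R : ℂ) * exp (α * I) + S * exp (β * I) =
      (R + S * exp ((β - α : ℝ) * I)) * exp (α * I) := by
    rw [add_mul, mul_assoc, ← exp_add]
    push_cast
    ring_nf
  rw [hsplit]
  refine mul_ne_zero (fun h0 => ?_) (exp_ne_zero _)
  generalize β - α = θ at h h0
  have him : S * Real.sin θ = 0 := by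
    simpa [exp_ofReal_mul_I_im] using congrArg im h0
  obtain hθ : θ = 0 := by
    by_contra hne
    exact (mul_pos hS (Real.sin_pos_of_pos_of_lt_pi (h.1.lt_of_ne' hne) h.2)).ne' him
  have hre := congrArg re h0
  simp [hθ] at hre
  linarith

end Complex

theorem Multiset.prod_eq_norm_mul_exp_sum_arg (s : Multiset ℂ) :
    s.prod = ‖s.prod‖ * Complex.exp ((s.map Complex.arg).sum * Complex.I) := by
  induction s using Multiset.induction with
  | empty => simp
  | cons a s ih =>
    rw [Multiset.prod_cons, Multiset.map_cons, Multiset.sum_cons, norm_mul]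
    conv_lhs => rw [← Complex.norm_mul_exp_arg_mul_I a, ih]
    push_cast
    rw [add_mul, Complex.exp_add]
    ring

theorem OnlyNonposZeros.realRooted {A : ℝ[X]} (h : OnlyNonposZeros A) : RealRooted A :=
  h.imp_right fun h z hz => (h z hz).1

theorem OnlyNonposZeros.roots_nonpos {A : ℝ[X]} (h : OnlyNonposZeros A) :
    ∀ x ∈ A.roots, x ≤ 0 := by
  intro x hx
  have hA := ne_zero_of_mem_roots hx
  have : aeval (x : ℂ) A = 0 := by
    simpa [((mem_roots hA).1 hx).eq_zero] using aeval_ofReal (K := ℂ) A x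
  simpa using ((h.resolve_left hA) _ this).2

theorem RealRooted.of_aeval_ne_zero_of_im_pos {F : ℝ[X]}
    (h : ∀ w : ℂ, 0 < w.im → aeval w F ≠ 0) : RealRooted F := by
  refine Or.inr fun z hz => ?_
  by_contra hne
  rcases lt_or_gt_of_ne hne with hneg | hpos
  · refine h (starRingEnd ℂ z) (by simpa using hneg) ?_
    rw [aeval_conj, hz, map_zero]
  · exact h z hpos hz

theorem RealRooted.splits {A : ℝ[X]} (h : RealRooted A) : A.Splits := by
  rcases h with rfl | h
  · exact Splits.zero
  refine Splits.of_splits_map_of_injective (algebraMap ℝ ℂ).injective (IsAlgClosed.splits _)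
    fun z hz => ⟨z.re, Complex.ext rfl (h z (mem_aroots'.1 hz).2).symm⟩

theorem RealRooted.mul {A B : ℝ[X]} (hA : RealRooted A) (hB : RealRooted B) :
    RealRooted (A * B) := by
  rcases hA with rfl | hA
  · simp [RealRooted]
  rcases hB with rfl | hB
  · simp [RealRooted]
  refine Or.inr fun z hz => ?_
  rw [map_mul, mul_eq_zero] at hz
  exact hz.elim (hA z) (hB z)

theorem realRooted_C (a : ℝ) : RealRooted (C a) := by
  refine (eq_or_ne a 0).imp (by simp +contextual) fun ha z hz => ?_
  simp [ha] at hz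

theorem realRooted_X : RealRooted (X : ℝ[X]) :=
  Or.inr fun z hz => by simp_all

theorem Standard.X_mul {A : ℝ[X]} (h : Standard A) : Standard (X * A) :=
  h.imp (fun h => by rw [h, mul_zero]) fun h => by rwa [leadingCoeff_mul, leadingCoeff_X, one_mul]

theorem pairwise_sroots (A : ℝ[X]) : (sroots A).Pairwise (· ≤ ·) := Multiset.pairwise_sort _ _

theorem Polynomial.Splits.length_sroots {A : ℝ[X]} (hA : A.Splits) :
    (sroots A).length = A.natDegree := by
  rw [sroots, Multiset.length_sort, hA.natDegree_eq_card_roots]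

theorem sum_map_sroots (A : ℝ[X]) (f : ℝ → ℝ) :
    ((sroots A).map f).sum = (A.roots.map f).sum := by
  rw [← Multiset.sum_coe, ← Multiset.map_coe, sroots, Multiset.sort_eq]

theorem interlaces_iff_alternating {A B : ℝ[X]} (hA : A.Splits) (hB : B.Splits) :
    Interlaces A B ↔ B.natDegree = A.natDegree + 1 ∧ Alternating (sroots B) (sroots A) := by
  refine and_congr_right fun hdeg => ?_
  rw [Alternating, hA.length_sroots, hB.length_sroots, hdeg]
  exact ⟨fun h => ⟨fun i hi => (h i hi).1, fun i hi => (h i (by omega)).2⟩,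
    fun h i hi => ⟨h.1 i hi, h.2 i (by omega)⟩⟩

theorem altLeft_iff_alternating {A B : ℝ[X]} (hA : A.Splits) (hB : B.Splits) :
    AltLeft A B ↔ A.natDegree = B.natDegree ∧ Alternating (sroots A) (sroots B) := by
  refine and_congr_right fun hdeg => ?_
  rw [Alternating, hA.length_sroots, hB.length_sroots, hdeg]

noncomputable def rootCountLE (A : ℝ[X]) (t : ℝ) : ℕ := A.roots.countP (· ≤ t)

theorem countP_sroots (A : ℝ[X]) (t : ℝ) : (sroots A).countP (· ≤ t) = rootCountLE A t := by
  rw [rootCountLE, sroots, ← Multiset.coe_countP, Multiset.sort_eq]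

theorem interlaces_iff_rootCountLE {A B : ℝ[X]} (hA : A.Splits) (hB : B.Splits) :
    Interlaces A B ↔ B.natDegree = A.natDegree + 1 ∧
      ∀ t, rootCountLE A t ≤ rootCountLE B t ∧ rootCountLE B t ≤ rootCountLE A t + 1 := by
  simp only [interlaces_iff_alternating hA hB, ← countP_sroots]
  refine and_congr_right fun hdeg => alternating_iff_countP (pairwise_sroots B)
    (pairwise_sroots A) ?_ ?_ <;> rw [hA.length_sroots, hB.length_sroots] <;> omega

theorem altLeft_iff_rootCountLE {A B : ℝ[X]} (hA : A.Splits) (hB : B.Splits) :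
    AltLeft A B ↔ A.natDegree = B.natDegree ∧
      ∀ t, rootCountLE B t ≤ rootCountLE A t ∧ rootCountLE A t ≤ rootCountLE B t + 1 := by
  simp only [altLeft_iff_alternating hA hB, ← countP_sroots]
  refine and_congr_right fun hdeg => alternating_iff_countP (pairwise_sroots A)
    (pairwise_sroots B) ?_ ?_ <;> rw [hA.length_sroots, hB.length_sroots] <;> omega

theorem rootCountLE_mul {A B : ℝ[X]} (hA : A ≠ 0) (hB : B ≠ 0) (t : ℝ) :
    rootCountLE (A * B) t = rootCountLE A t + rootCountLE B t := by
  rw [rootCountLE, roots_mul (mul_ne_zero hA hB), Multiset.countP_add, rootCountLE, rootCountLE]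

theorem rootCountLE_X (t : ℝ) : rootCountLE X t = if 0 ≤ t then 1 else 0 := by
  rw [rootCountLE, roots_X, ← Multiset.cons_zero, Multiset.countP_cons, Multiset.countP_zero,
    zero_add]

theorem rootCountLE_eq_natDegree {A : ℝ[X]} (hA : A.Splits) (h : OnlyNonposZeros A) {t : ℝ}
    (ht : 0 ≤ t) : rootCountLE A t = A.natDegree := by
  rw [rootCountLE, hA.natDegree_eq_card_roots, Multiset.countP_eq_card]
  exact fun x hx => (h.roots_nonpos x hx).trans ht

theorem Prec.mul_left {F P Q : ℝ[X]} (hF : RealRooted F) (hPQ : Prec P Q) :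
    Prec (F * P) (F * Q) := by
  rcases eq_or_ne F 0 with rfl | hF0
  · exact Or.inl (zero_mul P)
  rcases hPQ with rfl | rfl | ⟨hP, hQ, hPQ⟩
  · exact Or.inl (mul_zero F)
  · exact Or.inr (Or.inl (mul_zero F))
  rcases eq_or_ne P 0 with rfl | hP0
  · exact Or.inl (mul_zero F)
  rcases eq_or_ne Q 0 with rfl | hQ0
  · exact Or.inr (Or.inl (mul_zero F))
  refine Or.inr (Or.inr ⟨hF.mul hP, hF.mul hQ, ?_⟩)
  rw [interlaces_iff_rootCountLE hP.splits hQ.splits,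
    altLeft_iff_rootCountLE hP.splits hQ.splits] at hPQ
  rw [interlaces_iff_rootCountLE (hF.mul hP).splits (hF.mul hQ).splits,
    altLeft_iff_rootCountLE (hF.mul hP).splits (hF.mul hQ).splits, natDegree_mul hF0 hP0,
    natDegree_mul hF0 hQ0]
  simp only [rootCountLE_mul hF0 hP0, rootCountLE_mul hF0 hQ0]
  rcases hPQ with ⟨hdeg, hcount⟩ | ⟨hdeg, hcount⟩
  · exact Or.inl ⟨by omega, fun t => by have := hcount t; omega⟩
  · exact Or.inr ⟨by omega, fun t => by have := hcount t; omega⟩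

theorem Prec.prec_X_mul {A B : ℝ[X]} (hA : OnlyNonposZeros A) (hB : OnlyNonposZeros B)
    (hAB : Prec A B) : Prec B (X * A) := by
  rcases eq_or_ne A 0 with rfl | hA0
  · exact Or.inr (Or.inl (mul_zero X))
  rcases eq_or_ne B 0 with rfl | hB0
  · exact Or.inl rfl
  obtain ⟨hAr, hBr, hAB⟩ := (hAB.resolve_left hA0).resolve_left hB0
  have hXAr := realRooted_X.mul hAr
  rw [interlaces_iff_rootCountLE hAr.splits hBr.splits,
    altLeft_iff_rootCountLE hAr.splits hBr.splits] at hAB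
  refine Or.inr (Or.inr ⟨hBr, hXAr, ?_⟩)
  rw [interlaces_iff_rootCountLE hBr.splits hXAr.splits,
    altLeft_iff_rootCountLE hBr.splits hXAr.splits, natDegree_X_mul hA0]
  simp only [rootCountLE_mul X_ne_zero hA0, rootCountLE_X]
  have hnonneg {t : ℝ} (ht : 0 ≤ t) := And.intro
    (rootCountLE_eq_natDegree hAr.splits hA ht) (rootCountLE_eq_natDegree hBr.splits hB ht)
  rcases hAB with ⟨hdeg, hcount⟩ | ⟨hdeg, hcount⟩
  · refine Or.inr ⟨hdeg, fun t => ?_⟩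
    split_ifs with ht
    · have := hnonneg ht; omega
    · have := hcount t; omega
  · refine Or.inl ⟨by omega, fun t => ?_⟩
    split_ifs with ht
    · have := hnonneg ht; omega
    · have := hcount t; omega

theorem Polynomial.Splits.exists_aeval_eq_mul_exp {A : ℝ[X]} (hA : A.Splits)
    (hlc : 0 < A.leadingCoeff) {w : ℂ} (hw : 0 < w.im) : ∃ R : ℝ, 0 < R ∧
      aeval w A =
        R * Complex.exp ((A.roots.map fun t : ℝ => Complex.arg (w - t)).sum * Complex.I) := by
  set s := A.roots.map fun t : ℝ => w - t
  have hs : 0 ∉ s := by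
    simp only [s, Multiset.mem_map, not_exists, not_and]
    exact fun t _ h => hw.ne' (by simpa using congrArg Complex.im h)
  refine ⟨A.leadingCoeff * ‖s.prod‖,
    mul_pos hlc (norm_pos_iff.2 (Multiset.prod_ne_zero hs)), ?_⟩
  have hAw : aeval w A = A.leadingCoeff * s.prod := by
    conv_lhs => rw [hA.eq_prod_roots]
    simp [s, map_multiset_prod, Multiset.map_map]
  rw [hAw]
  nth_rewrite 1 [s.prod_eq_norm_mul_exp_sum_arg]
  simp only [s, Multiset.map_map, Function.comp_def, Complex.ofReal_mul]
  ring

theorem aeval_C_mul_add_C_mul_ne_zero {A B : ℝ[X]} (hA : A.Splits) (hB : B.Splits)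
    (hAl : 0 < A.leadingCoeff) (hBl : 0 < B.leadingCoeff) (hAB : Interlaces A B ∨ AltLeft A B)
    {l r : ℝ} (hl : 0 < l) (hr : 0 < r) {w : ℂ} (hw : 0 < w.im) :
    aeval w (C l * A + C r * B) ≠ 0 := by
  set f : ℝ → ℝ := fun t => Complex.arg (w - t)
  have hf := Complex.monotone_arg_sub_ofReal hw
  have hf0 s : 0 ≤ f s := (Complex.arg_sub_ofReal_mem_Ioo hw s).1.le
  have hfπ s : f s < Real.pi := (Complex.arg_sub_ofReal_mem_Ioo hw s).2
  have hθ : ((sroots B).map f).sum - ((sroots A).map f).sum ∈ Set.Ico 0 Real.pi := by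
    rcases hAB with hAB | hAB
    · obtain ⟨hdeg, halt⟩ := (interlaces_iff_alternating hA hB).1 hAB
      refine halt.sum_map_sub_mem_Ico_of_length_eq_succ ?_ hf hf0 hfπ
      rw [hA.length_sroots, hB.length_sroots, hdeg]
    · obtain ⟨hdeg, halt⟩ := (altLeft_iff_alternating hA hB).1 hAB
      refine halt.sum_map_sub_mem_Ico_of_length_eq ?_ hf hf0 hfπ
      rw [hA.length_sroots, hB.length_sroots, hdeg]
  rw [sum_map_sroots, sum_map_sroots] at hθ
  obtain ⟨R, hR, hAw⟩ := hA.exists_aeval_eq_mul_exp hAl hw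
  obtain ⟨S, hS, hBw⟩ := hB.exists_aeval_eq_mul_exp hBl hw
  have := Complex.ofReal_mul_exp_add_ofReal_mul_exp_ne_zero (mul_pos hl hR) (mul_pos hr hS) hθ
  simpa [hAw, hBw, mul_assoc] using this

theorem realRooted_C_mul_add_C_mul {A B : ℝ[X]} (hA : Standard A) (hB : Standard B)
    (hAr : RealRooted A) (hBr : RealRooted B) (hAB : Prec A B) {l r : ℝ} (hl : 0 < l)
    (hr : 0 < r) : RealRooted (C l * A + C r * B) := by
  rcases eq_or_ne A 0 with rfl | hA0
  · simpa using (realRooted_C r).mul hBr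
  rcases eq_or_ne B 0 with rfl | hB0
  · simpa using (realRooted_C l).mul hAr
  obtain ⟨-, -, hAB⟩ := (hAB.resolve_left hA0).resolve_left hB0
  exact RealRooted.of_aeval_ne_zero_of_im_pos fun w hw => aeval_C_mul_add_C_mul_ne_zero
    hAr.splits hBr.splits (hA.resolve_left hA0) (hB.resolve_left hB0) hAB hl hr hw

theorem stmt12_general (A B P Q : Polynomial ℝ)
    (hA : Standard A) (hB : Standard B)
    (hA' : OnlyNonposZeros A) (hB' : OnlyNonposZeros B)
    (hAB : Prec A B) (hPQ : Prec P Q) :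
    ∀ l r : ℝ, 0 < l → 0 < r →
      Prec (C l * (A * P) + C r * (B * P)) (C l * (A * Q) + C r * (B * Q)) ∧
        Prec (C l * (B * P) + C r * (X * (A * P))) (C l * (B * Q) + C r * (X * (A * Q))) := by
  intro l r hl hr
  have hAr := hA'.realRooted
  have hBr := hB'.realRooted
  have hF₁ := realRooted_C_mul_add_C_mul hA hB hAr hBr hAB hl hr
  have hF₂ := realRooted_C_mul_add_C_mul hB hA.X_mul hBr (realRooted_X.mul hAr)
    (hAB.prec_X_mul hA' hB') hl hr
  constructor
  · convert hPQ.mul_left hF₁ using 1 <;> ring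
  · convert hPQ.mul_left hF₂ using 1 <;> ring

/-- Lemma 4.2: if `A ≺ B` and `P ≺ Q` are pairs of standard polynomials with only real
nonpositive zeros, then `(AP, BP, AQ, BQ)` is an interpolatory square: for all `λ, ρ > 0`,
`λAP + ρBP ≺ λAQ + ρBQ` and `λBP + ρxAP ≺ λBQ + ρxAQ`. -/
theorem stmt12 (A B P Q : Polynomial ℝ)
    (hA : Standard A) (hB : Standard B) (hP : Standard P) (hQ : Standard Q)
    (hA' : OnlyNonposZeros A) (hB' : OnlyNonposZeros B)
    (hP' : OnlyNonposZeros P) (hQ' : OnlyNonposZeros Q)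
    (hAB : Prec A B) (hPQ : Prec P Q) :
    ∀ l r : ℝ, 0 < l → 0 < r →
      Prec (C l * (A * P) + C r * (B * P)) (C l * (A * Q) + C r * (B * Q)) ∧
        Prec (C l * (B * P) + C r * (X * (A * P))) (C l * (B * Q) + C r * (X * (A * Q))) :=
  stmt12_general A B P Q hA hB hA' hB' hAB hPQ
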